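/- arXiv:1209.1760 — 4 statements merged into one kernel-verified Lean document; each statement's English description precedes it below -/
import Mathlib

section
/- Let X ⊆ Σ_A be a shift space. The following are equivalent: (i) X is row-finite (for every a ∈ A, the set {b ∈ A : ab ∈ B(X)} is finite); (ii) X^fin ⊆ {0⃗}; (iii) X^inf ∪ {0⃗} is closed in Σ_A; (iv) either X = X^inf ∪ {0⃗} or X is finite-symbol; (v) for each a ∈ A the set {b : ∃ x ∈ X^inf with abx ∈ X} is finite. -/
open Topology Filter Set

noncomputable section

/-- The set of finite and infinite sequences over the alphabet `A`, encoded as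
functions `ℕ → Option A` which, once `none`, stay `none`. -/
def Sig (A : Type*) : Type _ :=
  {f : ℕ → Option A // ∀ n, f n = none → f (n + 1) = none}

namespace Sig

variable {A : Type*}

/-- The empty sequence `0⃗`. -/
def nil : Sig A := ⟨fun _ => none, fun _ _ => rfl⟩

/-- The length of a sequence, an extended natural number. -/
def len (x : Sig A) : ℕ∞ := sInf {n : ℕ∞ | ∃ k : ℕ, n = (k : ℕ∞) ∧ x.1 k = none}

/-- The finite sequence determined by a list. -/
def ofList (w : List A) : Sig A :=
  ⟨fun n => w[n]?, fun n h => by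
    rw [List.getElem?_eq_none_iff] at h ⊢
    omega⟩

/-- The shift map: delete the first entry. -/
def shift (x : Sig A) : Sig A := ⟨fun n => x.1 (n + 1), fun n h => x.2 _ h⟩

/-- The cylinder set `Z(w)` of all sequences beginning with the finite word `w`. -/
def cyl (w : List A) : Set (Sig A) := {z | ∀ i < w.length, z.1 i = w[i]?}

/-- The generalized cylinder set `Z(w, F)`. -/
def cylF (w : List A) (F : Set A) : Set (Sig A) := cyl w \ ⋃ a ∈ F, cyl (w ++ [a])

/-- The space `X_A = A_∞^ℕ` where `A_∞` is the one-point compactification of the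
discrete space `A`. -/
def XA (A : Type*) : Type _ := ℕ → OnePoint A

instance (A : Type*) : TopologicalSpace (XA A) :=
  letI : TopologicalSpace A := ⊥
  inferInstanceAs (TopologicalSpace (ℕ → OnePoint A))

/-- View a point of `A_∞` as an `Option A` (they are definitionally equal). -/
def toOpt (y : OnePoint A) : Option A := y

open Classical in
/-- The quotient map `Q : X_A → Σ_A`, cutting a sequence over `A_∞` at the first
occurrence of `∞`. -/
def Q (x : XA A) : Sig A :=
  ⟨fun n => if ∃ i ≤ n, x i = OnePoint.infty then none else toOpt (x n), by
    intro n h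
    dsimp only at h ⊢
    by_cases hex : ∃ i ≤ n, x i = OnePoint.infty
    · obtain ⟨i, hi, hxi⟩ := hex
      exact if_pos ⟨i, hi.trans (Nat.le_succ n), hxi⟩
    · rw [if_neg hex] at h
      have : x n = OnePoint.infty := h
      exact absurd ⟨n, le_refl n, this⟩ hex⟩

/-- The quotient topology on `Σ_A` induced by `Q`. -/
instance (A : Type*) : TopologicalSpace (Sig A) :=
  TopologicalSpace.coinduced Q inferInstance

/-- `w` occurs as a subblock of the sequence `x`. -/
def IsSubblock (w : List A) (x : Sig A) : Prop :=
  ∃ k, ∀ i < w.length, x.1 (k + i) = w[i]?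

/-- The set of blocks (finite subwords) of elements of `X`. -/
def blocks (X : Set (Sig A)) : Set (List A) := {w | ∃ x ∈ X, IsSubblock w x}

/-- A shift space: closed, shift invariant, with the infinite-extension property. -/
def IsShiftSpace (X : Set (Sig A)) : Prop :=
  IsClosed X ∧ (∀ x ∈ X, shift x ∈ X) ∧
    ∀ w : List A, ofList w ∈ X → {a : A | (X ∩ cyl (w ++ [a])).Nonempty}.Infinite

/-- A shift space is row-finite if every symbol can be followed by only finitely
many symbols. -/
def RowFinite (X : Set (Sig A)) : Prop := ∀ a : A, {b : A | [a, b] ∈ blocks X}.Finite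

/-- The set of infinite sequences avoiding all blocks from `F`. -/
def XFinf (F : Set (List A)) : Set (Sig A) :=
  {x | len x = ⊤ ∧ ∀ w ∈ F, ¬ IsSubblock w x}

/-- The set of finite sequences with infinitely many extensions into `X_F^inf`. -/
def XFfin (F : Set (List A)) : Set (Sig A) :=
  {x | ∃ w : List A, x = ofList w ∧
    {a : A | (XFinf F ∩ cyl (w ++ [a])).Nonempty}.Infinite}

/-- The shift space `X_F` determined by the forbidden blocks `F`. -/
def XF (F : Set (List A)) : Set (Sig A) := XFinf F ∪ XFfin F

end Sig

namespace Sig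

variable {A : Type*}

lemma none_mono (x : Sig A) {n m : ℕ} (h : x.1 n = none) (hnm : n ≤ m) : x.1 m = none := by
  induction hnm with
  | refl => exact h
  | step h' ih => exact x.2 _ ih

lemma len_eq_top_iff (x : Sig A) : len x = ⊤ ↔ ∀ n, x.1 n ≠ none := by
  unfold len
  rw [sInf_eq_top]
  constructor
  · intro h n hn
    exact (ENat.coe_ne_top n) (h n ⟨n, rfl, hn⟩)
  · rintro h a ⟨k, rfl, hk⟩
    exact absurd hk (h k)

lemma eq_nil_of_zero (x : Sig A) (h : x.1 0 = none) : x = nil :=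
  Subtype.ext (funext fun n => none_mono x h (Nat.zero_le n))

lemma ofList_nil : ofList ([] : List A) = nil :=
  Subtype.ext (funext fun n => by simp [ofList, nil])

lemma ofList_ne_nil {w : List A} (hw : w ≠ []) : ofList w ≠ nil := by
  intro h
  have h0 : (ofList w).1 0 = none := by rw [h]; rfl
  simp only [ofList] at h0
  rw [List.getElem?_eq_getElem (List.length_pos_iff.mpr hw)] at h0
  simp at h0

lemma len_ofList_ne_top (w : List A) : len (ofList w) ≠ ⊤ := by
  intro h
  exact (len_eq_top_iff _).mp h w.length (by simp [ofList])

lemma exists_ofList (x : Sig A) (h : len x ≠ ⊤) : ∃ w : List A, x = ofList w := by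
  classical
  have hex : ∃ n, x.1 n = none := by
    by_contra hc
    push_neg at hc
    exact h ((len_eq_top_iff x).mpr hc)
  let n := Nat.find hex
  have hn : x.1 n = none := Nat.find_spec hex
  have hlt : ∀ i, i < n → x.1 i ≠ none := fun i hi => Nat.find_min hex hi
  refine ⟨List.ofFn (fun i : Fin n => (x.1 i).get (Option.ne_none_iff_isSome.mp (hlt i i.2))), ?_⟩
  apply Subtype.ext; funext m
  show x.1 m = (List.ofFn _)[m]?
  by_cases hm : m < n
  · rw [List.getElem?_eq_getElem (by simpa using hm)]
    simp only [List.getElem_ofFn]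
    exact (Option.some_get _).symm
  · rw [List.getElem?_eq_none (by simpa using hm), none_mono x hn (by omega)]

/-- Canonical lift of a sequence to `X_A`, padding with `∞`. -/
def lift (x : Sig A) : XA A := fun n => (x.1 n : Option A)

lemma lift_eq_infty_iff (x : Sig A) (n : ℕ) : lift x n = OnePoint.infty ↔ x.1 n = none :=
  Iff.rfl

open Classical in
lemma Q_lift (x : Sig A) : Q (lift x) = x := by
  apply Subtype.ext; funext n
  show (if ∃ i ≤ n, lift x i = OnePoint.infty then none else toOpt (lift x n)) = x.1 n
  by_cases hex : ∃ i ≤ n, lift x i = OnePoint.infty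
  · rw [if_pos hex]
    obtain ⟨i, hi, hxi⟩ := hex
    exact (none_mono x ((lift_eq_infty_iff x i).mp hxi) hi).symm
  · rw [if_neg hex]
    rfl

lemma continuous_Q : Continuous (Q : XA A → Sig A) := continuous_coinduced_rng

lemma isClosed_of_preimage (C : Set (Sig A)) (h : IsClosed (Q ⁻¹' C)) : IsClosed C := by
  rw [← isOpen_compl_iff] at h ⊢
  exact isOpen_coinduced.mpr h

open Classical in
lemma Q_apply (x : XA A) (n : ℕ) :
    (Q x).1 n = if h : ∃ i ≤ n, x i = OnePoint.infty then none else toOpt (x n) := by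
  simp only [Q]
  split_ifs with h
  · rfl
  · rfl

lemma Q_eq_nil_iff (x : XA A) : Q x = nil ↔ x 0 = OnePoint.infty := by
  constructor
  · intro h
    have h0 : (Q x).1 0 = none := by rw [h]; rfl
    rw [Q_apply] at h0
    by_contra hc
    rw [dif_neg (by rintro ⟨i, hi, hxi⟩; interval_cases i; exact hc hxi)] at h0
    exact hc h0
  · intro h
    apply eq_nil_of_zero
    rw [Q_apply, dif_pos ⟨0, le_rfl, h⟩]

lemma isClosed_nil : IsClosed ({nil} : Set (Sig A)) := by
  letI : TopologicalSpace A := ⊥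
  haveI : DiscreteTopology A := ⟨rfl⟩
  apply isClosed_of_preimage
  have : Q ⁻¹' {nil} = (fun x : XA A => x 0) ⁻¹' {OnePoint.infty} := by
    ext x
    simp only [Set.mem_preimage, Set.mem_singleton_iff]
    exact Q_eq_nil_iff x
  rw [this]
  exact isClosed_singleton.preimage (continuous_apply 0)

open Filter in
lemma limit_mem {C : Set (Sig A)} (hC : IsClosed C) {S : Set A} (hS : S.Infinite)
    (w : List A) (y : A → Sig A) (hy : ∀ b ∈ S, y b ∈ C ∩ cyl (w ++ [b])) :
    ofList w ∈ C := by
  classical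
  letI : TopologicalSpace A := ⊥
  haveI : DiscreteTopology A := ⟨rfl⟩
  haveI hne : (cofinite ⊓ 𝓟 S).NeBot := hS.cofinite_inf_principal_neBot
  let U : Ultrafilter A := Ultrafilter.of (cofinite ⊓ 𝓟 S)
  have hU : ↑U ≤ cofinite ⊓ 𝓟 S := Ultrafilter.of_le _
  have hUS : S ∈ U := hU (le_principal_iff.mp inf_le_right : S ∈ cofinite ⊓ 𝓟 S)
  let g : A → XA A := fun b => lift (y b)
  haveI : CompactSpace (XA A) := inferInstanceAs (CompactSpace (ℕ → OnePoint A))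
  haveI : T2Space (XA A) := inferInstanceAs (T2Space (ℕ → OnePoint A))
  obtain ⟨p, -, hp⟩ := (isCompact_univ (X := XA A)).ultrafilter_le_nhds (U.map g)
    (by simp)
  have hten : Tendsto g ↑U (𝓝 p) := hp
  -- p is in the preimage of C
  have hpC : p ∈ Q ⁻¹' C := by
    refine (hC.preimage continuous_Q).mem_of_tendsto hten ?_
    filter_upwards [hUS] with b hb
    show Q (lift (y b)) ∈ C
    rw [Q_lift]
    exact (hy b hb).1
  -- coordinates of p
  have hcoord : ∀ n, Tendsto (fun b => g b n) ↑U (𝓝 (p n)) :=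
    fun n => ((continuous_apply n).tendsto p).comp hten
  have h1 : ∀ n, (hn : n < w.length) → p n = (w[n] : OnePoint A) := by
    intro n hn
    refine tendsto_nhds_unique (hcoord n) ?_
    have : ∀ᶠ b in ↑U, g b n = (w[n] : OnePoint A) := by
      filter_upwards [hUS] with b hb
      have := (hy b hb).2 n (by simp; omega)
      show ((y b).1 n : OnePoint A) = _
      rw [this, List.getElem?_append_left hn, List.getElem?_eq_getElem hn]
      rfl
    exact tendsto_const_nhds.congr' (this.mono fun b hb => hb.symm)
  have h2 : p w.length = OnePoint.infty := by
    refine tendsto_nhds_unique (hcoord w.length) ?_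
    have hcoe : Tendsto (fun b : A => (b : OnePoint A)) ↑U (𝓝 OnePoint.infty) := by
      refine OnePoint.tendsto_coe_infty.mono_left ?_
      rw [coclosedCompact_eq_cocompact, cocompact_eq_cofinite]
      exact hU.trans inf_le_left
    have : ∀ᶠ b in ↑U, g b w.length = (b : OnePoint A) := by
      filter_upwards [hUS] with b hb
      have := (hy b hb).2 w.length (by simp)
      show ((y b).1 w.length : OnePoint A) = _
      rw [this]
      have : (w ++ [b])[w.length]? = some b := by
        rw [List.getElem?_append_right le_rfl]
        simp
      rw [this]
      rfl
    exact hcoe.congr' (this.mono fun b hb => hb.symm)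
  -- conclude
  have hQp : Q p = ofList w := by
    apply Subtype.ext; funext n
    rw [Q_apply]
    by_cases hn : n < w.length
    · rw [dif_neg]
      · have := h1 n hn
        rw [this]
        show some (w[n]'hn) = (ofList w).1 n
        rw [show (ofList w).1 n = w[n]? from rfl, List.getElem?_eq_getElem hn]
      · rintro ⟨i, hi, hxi⟩
        have hiw : i < w.length := lt_of_le_of_lt hi hn
        rw [h1 i hiw] at hxi
        exact (OnePoint.coe_ne_infty _) hxi
    · rw [dif_pos ⟨w.length, by omega, h2⟩]
      rw [show (ofList w).1 n = w[n]? from rfl, List.getElem?_eq_none (by omega)]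
  rw [← hQp]
  exact hpC

lemma ofList_apply (w : List A) (n : ℕ) : (ofList w).1 n = w[n]? := rfl

lemma cyl_anti {u v : List A} (h : u <+: v) : cyl v ⊆ cyl u := by
  intro z hz i hi
  rw [hz i (lt_of_lt_of_le hi h.length_le)]
  obtain ⟨t, rfl⟩ := h
  exact List.getElem?_append_left hi

lemma prefix_of_mem_cyl {u v : List A} (h : ofList v ∈ cyl u) : u <+: v := by
  have hlen : u.length ≤ v.length := by
    by_contra hc
    push_neg at hc
    have h2 := h v.length hc
    rw [ofList_apply, List.getElem?_eq_none le_rfl, List.getElem?_eq_getElem hc] at h2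
    simp at h2
  rw [List.prefix_iff_eq_take]
  apply List.ext_getElem?
  intro n
  rw [List.getElem?_take]
  by_cases hn : n < u.length
  · rw [if_pos hn, ← h n hn]
    rfl
  · rw [if_neg hn, List.getElem?_eq_none (by omega)]

lemma shift_iterate_apply (x : Sig A) (k n : ℕ) : (shift^[k] x).1 n = x.1 (n + k) := by
  induction k generalizing x with
  | zero => rfl
  | succ k ih =>
    rw [Function.iterate_succ_apply, ih (shift x)]
    show x.1 (n + k + 1) = x.1 (n + (k + 1))
    ring_nf

lemma shift_iterate_mem {X : Set (Sig A)} (hX : IsShiftSpace X) {x : Sig A} (hx : x ∈ X)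
    (k : ℕ) : shift^[k] x ∈ X := by
  induction k with
  | zero => exact hx
  | succ k ih =>
    rw [Function.iterate_succ_apply']
    exact hX.2.1 _ ih

lemma len_shift_top {x : Sig A} (h : len x = ⊤) : len (shift x) = ⊤ := by
  rw [len_eq_top_iff] at h ⊢
  intro n
  exact h (n + 1)

lemma exists_inf_ext {X : Set (Sig A)} (hX : IsShiftSpace X) {w : List A}
    (hw : ofList w ∈ X) : ∃ z, z ∈ X ∧ len z = ⊤ ∧ z ∈ cyl w := by
  classical
  by_contra hcon
  push_neg at hcon
  have hstep : ∀ v : List A, ofList v ∈ X → w <+: v →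
      ∃ v' : List A, (ofList v' ∈ X ∧ w <+: v') ∧ v <+: v' ∧ v.length < v'.length := by
    intro v hv hwv
    obtain ⟨a, z, hzX, hzcyl⟩ := (hX.2.2 v hv).nonempty
    have hzw : z ∈ cyl w := cyl_anti (hwv.trans (List.prefix_append v [a])) hzcyl
    have hzlen : len z ≠ ⊤ := fun htop => hcon z hzX htop hzw
    obtain ⟨v', rfl⟩ := exists_ofList z hzlen
    have hpre : v ++ [a] <+: v' := prefix_of_mem_cyl hzcyl
    have hv'pre : v <+: v' := (List.prefix_append v [a]).trans hpre
    refine ⟨v', ⟨hzX, hwv.trans hv'pre⟩, hv'pre, ?_⟩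
    have := hpre.length_le
    simp only [List.length_append, List.length_singleton] at this
    omega
  have hstep' : ∀ t : {v : List A // ofList v ∈ X ∧ w <+: v},
      ∃ t' : {v : List A // ofList v ∈ X ∧ w <+: v},
        t.1 <+: t'.1 ∧ t.1.length < t'.1.length := by
    rintro ⟨v, hv1, hv2⟩
    obtain ⟨v', hv', h1, h2⟩ := hstep v hv1 hv2
    exact ⟨⟨v', hv'⟩, h1, h2⟩
  choose nxt hn1 hn2 using hstep'
  set f : ℕ → {v : List A // ofList v ∈ X ∧ w <+: v} :=
    fun n => nxt^[n] ⟨w, hw, List.prefix_refl w⟩ with hf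
  have hf_succ : ∀ n, f (n + 1) = nxt (f n) := fun n => Function.iterate_succ_apply' nxt n _
  have hmono : ∀ n, (f n).1 <+: (f (n + 1)).1 := fun n => by rw [hf_succ]; exact hn1 (f n)
  have hchain : ∀ m n, m ≤ n → (f m).1 <+: (f n).1 := by
    intro m n hmn
    induction hmn with
    | refl => exact List.prefix_refl _
    | step _ ih => exact ih.trans (hmono _)
  have hlen : ∀ n, n ≤ (f n).1.length := by
    intro n
    induction n with
    | zero => omega
    | succ n ih =>
      have := hn2 (f n)
      rw [← hf_succ] at this
      omega
  have hget : ∀ n, n < (f (n + 1)).1.length := fun n => lt_of_lt_of_le (Nat.lt_succ_self n) (hlen (n + 1))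
  set z : Sig A := ⟨fun n => some ((f (n + 1)).1[n]'(hget n)),
    fun n h => absurd h (Option.some_ne_none _)⟩ with hz
  have hcoh : ∀ n m, n + 1 ≤ m → (ofList (f m).1).1 n = z.1 n := by
    intro n m hm
    obtain ⟨t, ht⟩ := hchain (n + 1) m hm
    show (f m).1[n]? = some _
    rw [← ht, List.getElem?_append_left (hget n), List.getElem?_eq_getElem (hget n)]
  have hzX : z ∈ X := by
    letI : TopologicalSpace A := ⊥
    have hlim : Filter.Tendsto (fun m => lift (ofList (f m).1)) Filter.atTop (𝓝 (lift z)) := by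
      refine tendsto_pi_nhds.mpr ?_
      intro n
      refine Filter.Tendsto.congr'
        (f₁ := fun _ => lift z n) ?_ tendsto_const_nhds
      filter_upwards [Filter.eventually_ge_atTop (n + 1)] with m hm
      exact (hcoh n m hm).symm
    have hmem : ∀ m, lift (ofList (f m).1) ∈ Q ⁻¹' X := fun m => by
      rw [Set.mem_preimage, Q_lift]
      exact (f m).2.1
    have hlz := (hX.1.preimage continuous_Q).mem_of_tendsto hlim
      (Filter.Eventually.of_forall hmem)
    rw [Set.mem_preimage, Q_lift] at hlz
    exact hlz
  have hztop : len z = ⊤ := by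
    rw [len_eq_top_iff]
    intro n
    exact Option.some_ne_none _
  have hzcyl : z ∈ cyl w := by
    intro i hi
    have hpw : w <+: (f (i + 1)).1 := (f (i + 1)).2.2
    show some ((f (i + 1)).1[i]'(hget i)) = w[i]?
    rw [List.getElem?_eq_getElem hi, hpw.getElem hi]
  exact hcon z hzX hztop hzcyl

lemma len_shift_iterate_top {x : Sig A} (h : len x = ⊤) (k : ℕ) : len (shift^[k] x) = ⊤ := by
  rw [len_eq_top_iff] at h ⊢
  intro m
  rw [shift_iterate_apply]
  exact h _

variable {X : Set (Sig A)}

lemma genE (hX : IsShiftSpace X) {u : List A} {y : Sig A} (hy : y ∈ X ∩ cyl u) :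
    ∃ z, z ∈ X ∧ len z = ⊤ ∧ z ∈ cyl u := by
  by_cases hl : len y = ⊤
  · exact ⟨y, hy.1, hl, hy.2⟩
  · obtain ⟨v, hv⟩ := exists_ofList y hl
    obtain ⟨z, h1, h2, h3⟩ := exists_inf_ext hX (hv ▸ hy.1)
    exact ⟨z, h1, h2, cyl_anti (prefix_of_mem_cyl (hv ▸ hy.2)) h3⟩

lemma p1 (hX : IsShiftSpace X) (h : RowFinite X) : ∀ x ∈ X, len x ≠ ⊤ → x = nil := by
  intro x hxX hlen
  by_contra hne
  obtain ⟨w, rfl⟩ := exists_ofList x hlen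
  have hw : w ≠ [] := fun h0 => hne (h0 ▸ ofList_nil)
  have hwpos : 0 < w.length := List.length_pos_iff.mpr hw
  have hinf := hX.2.2 w hxX
  refine hinf ((h (w[w.length - 1]'(by omega))).subset ?_)
  rintro c ⟨z, hzX, hzcyl⟩
  refine ⟨z, hzX, w.length - 1, ?_⟩
  intro i hi
  have hi2 : i < 2 := by simpa using hi
  clear hi
  interval_cases i
  · show z.1 (w.length - 1 + 0) = some (w[w.length - 1]'(by omega))
    rw [Nat.add_zero, hzcyl (w.length - 1) (by simp only [List.length_append]; omega),
      List.getElem?_append_left (by omega), List.getElem?_eq_getElem (by omega)]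
  · show z.1 (w.length - 1 + 1) = some c
    have he : w.length - 1 + 1 = w.length := by omega
    rw [he, hzcyl w.length (by simp), List.getElem?_concat_length]

lemma p2 (hX : IsShiftSpace X) (h : ∀ x ∈ X, len x ≠ ⊤ → x = nil) : RowFinite X := by
  classical
  intro a
  by_contra hfin
  have hS : {b | [a, b] ∈ blocks X}.Infinite := hfin
  have hex : ∀ b ∈ {b | [a, b] ∈ blocks X}, ∃ y, y ∈ X ∩ cyl ([a] ++ [b]) := by
    rintro b ⟨x, hxX, k, hk⟩
    refine ⟨shift^[k] x, shift_iterate_mem hX hxX k, ?_⟩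
    intro i hi
    rw [shift_iterate_apply, Nat.add_comm]
    exact hk i (by simpa using hi)
  haveI : Nonempty (Sig A) := ⟨nil⟩
  choose! y hy using hex
  have hmem := limit_mem hX.1 hS [a] y hy
  have h1 := h _ hmem (len_ofList_ne_top [a])
  exact ofList_ne_nil (by simp) h1

lemma p3 (hX : IsShiftSpace X) (h : ∀ x ∈ X, len x ≠ ⊤ → x = nil) :
    IsClosed ({x ∈ X | len x = ⊤} ∪ {nil}) := by
  have heq : {x ∈ X | len x = ⊤} ∪ {nil} = X ∪ {nil} := by
    apply Set.Subset.antisymm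
    · exact Set.union_subset_union_left _ (Set.sep_subset _ _)
    · rintro x (hx | hx)
      · by_cases hl : len x = ⊤
        · exact Or.inl ⟨hx, hl⟩
        · exact Or.inr (h x hx hl)
      · exact Or.inr hx
  rw [heq]
  exact hX.1.union isClosed_nil

lemma p4 (hX : IsShiftSpace X) (hcl : IsClosed ({x ∈ X | len x = ⊤} ∪ {nil})) :
    ∀ x ∈ X, len x ≠ ⊤ → x = nil := by
  classical
  intro x hxX hlen
  by_contra hne
  obtain ⟨w, rfl⟩ := exists_ofList x hlen
  have hw : w ≠ [] := fun h0 => hne (h0 ▸ ofList_nil)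
  have hinf := hX.2.2 w hxX
  have hex : ∀ c ∈ {a | (X ∩ cyl (w ++ [a])).Nonempty},
      ∃ z, z ∈ ({x ∈ X | len x = ⊤} ∪ {nil}) ∩ cyl (w ++ [c]) := by
    rintro c ⟨y, hy⟩
    obtain ⟨z, h1, h2, h3⟩ := genE hX hy
    exact ⟨z, Or.inl ⟨h1, h2⟩, h3⟩
  haveI : Nonempty (Sig A) := ⟨nil⟩
  choose! z hz using hex
  rcases limit_mem hcl hinf w z hz with ⟨-, htop⟩ | hnil
  · exact len_ofList_ne_top w htop
  · exact ofList_ne_nil hw hnil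

lemma p5 (hX : IsShiftSpace X) (h : ∀ x ∈ X, len x ≠ ⊤ → x = nil) :
    X = {x ∈ X | len x = ⊤} ∪ {nil} ∨ {a : A | [a] ∈ blocks X}.Finite := by
  classical
  by_cases hnil : nil ∈ X
  · left
    apply Set.Subset.antisymm
    · intro x hx
      by_cases hl : len x = ⊤
      · exact Or.inl ⟨hx, hl⟩
      · exact Or.inr (h x hx hl)
    · rintro x (⟨hx, -⟩ | hx)
      · exact hx
      · exact hx ▸ hnil
  · right
    by_contra hfin
    have hS : {a : A | [a] ∈ blocks X}.Infinite := hfin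
    have hex : ∀ b ∈ {a : A | [a] ∈ blocks X}, ∃ y, y ∈ X ∩ cyl ([] ++ [b]) := by
      rintro b ⟨x, hxX, k, hk⟩
      refine ⟨shift^[k] x, shift_iterate_mem hX hxX k, ?_⟩
      intro i hi
      simp only [List.nil_append, List.length_singleton] at hi
      interval_cases i
      rw [shift_iterate_apply, Nat.add_comm]
      exact hk 0 (by norm_num)
    haveI : Nonempty (Sig A) := ⟨nil⟩
    choose! y hy using hex
    have hmem := limit_mem hX.1 hS [] y hy
    rw [ofList_nil] at hmem
    exact hnil hmem

lemma p6 (hX : IsShiftSpace X)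
    (h : X = {x ∈ X | len x = ⊤} ∪ {nil} ∨ {a : A | [a] ∈ blocks X}.Finite) :
    ∀ x ∈ X, len x ≠ ⊤ → x = nil := by
  intro x hxX hlen
  rcases h with hEq | hfin
  · rw [hEq] at hxX
    rcases hxX with ⟨-, htop⟩ | hnil
    · exact absurd htop hlen
    · exact hnil
  · exfalso
    obtain ⟨w, rfl⟩ := exists_ofList x hlen
    refine (hX.2.2 w hxX) (hfin.subset ?_)
    rintro c ⟨z, hzX, hzcyl⟩
    refine ⟨z, hzX, w.length, ?_⟩
    intro i hi
    simp only [List.length_singleton] at hi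
    interval_cases i
    show z.1 (w.length + 0) = some c
    rw [Nat.add_zero, hzcyl w.length (by simp), List.getElem?_concat_length]

lemma p7 (h : RowFinite X) : ∀ a : A,
    {b : A | ∃ x ∈ X, len x = ⊤ ∧ ∃ z ∈ X, z.1 0 = some a ∧ z.1 1 = some b ∧
      shift (shift z) = x}.Finite := by
  intro a
  refine (h a).subset ?_
  rintro b ⟨x, hxX, htop, z, hzX, hz0, hz1, hsh⟩
  refine ⟨z, hzX, 0, ?_⟩
  intro i hi
  have hi2 : i < 2 := by simpa using hi
  clear hi
  interval_cases i
  · exact hz0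
  · exact hz1

lemma p8 (hX : IsShiftSpace X)
    (h : ∀ a : A, {b : A | ∃ x ∈ X, len x = ⊤ ∧ ∃ z ∈ X, z.1 0 = some a ∧ z.1 1 = some b ∧
      shift (shift z) = x}.Finite) :
    ∀ x ∈ X, len x ≠ ⊤ → x = nil := by
  classical
  intro x hxX hlen
  by_contra hne
  obtain ⟨w, rfl⟩ := exists_ofList x hlen
  have hw : w ≠ [] := fun h0 => hne (h0 ▸ ofList_nil)
  have hwpos : 0 < w.length := List.length_pos_iff.mpr hw
  refine (hX.2.2 w hxX) ((h (w[w.length - 1]'(by omega))).subset ?_)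
  rintro c ⟨y, hy⟩
  obtain ⟨z, hzX, hztop, hzcyl⟩ := genE hX hy
  have hzn : shift^[w.length - 1] z ∈ X := shift_iterate_mem hX hzX _
  refine ⟨shift (shift (shift^[w.length - 1] z)),
    hX.2.1 _ (hX.2.1 _ hzn), len_shift_top (len_shift_top (len_shift_iterate_top hztop _)),
    shift^[w.length - 1] z, hzn, ?_, ?_, rfl⟩
  · rw [shift_iterate_apply, Nat.zero_add, hzcyl (w.length - 1) (by simp only [List.length_append]; omega),
      List.getElem?_append_left (by omega), List.getElem?_eq_getElem (by omega)]
  · rw [shift_iterate_apply]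
    have he : 1 + (w.length - 1) = w.length := by omega
    rw [he, hzcyl w.length (by simp), List.getElem?_concat_length]

end Sig

/-- characterizations of row-finite shift spaces. -/
theorem stmt13 (A : Type*) (X : Set (Sig A)) (hX : Sig.IsShiftSpace X) :
    (Sig.RowFinite X ↔ ∀ x ∈ X, Sig.len x ≠ ⊤ → x = Sig.nil) ∧
      (Sig.RowFinite X ↔ IsClosed ({x ∈ X | Sig.len x = ⊤} ∪ {Sig.nil})) ∧
      (Sig.RowFinite X ↔
        (X = {x ∈ X | Sig.len x = ⊤} ∪ {Sig.nil} ∨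
          {a : A | [a] ∈ Sig.blocks X}.Finite)) ∧
      (Sig.RowFinite X ↔ ∀ a : A,
        {b : A | ∃ x ∈ X, Sig.len x = ⊤ ∧ ∃ z ∈ X, z.1 0 = some a ∧ z.1 1 = some b ∧
          Sig.shift (Sig.shift z) = x}.Finite) := by
  refine ⟨⟨Sig.p1 hX, Sig.p2 hX⟩,
    ⟨fun h => Sig.p3 hX (Sig.p1 hX h), fun h => Sig.p2 hX (Sig.p4 hX h)⟩,
    ⟨fun h => Sig.p5 hX (Sig.p1 hX h), fun h => Sig.p2 hX (Sig.p6 hX h)⟩,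
    ⟨Sig.p7, fun h => Sig.p2 hX (Sig.p8 hX h)⟩⟩
end
end

section
/- If E is a directed graph with no sinks and infinitely many edges, then the closure of E^∞ inside Σ_{E¹} equals E^∞ ∪ {α : α a finite path of positive length with r(α) an infinite emitter} ∪ {0⃗}, and this set is a shift space over the alphabet E¹. -/
open Topology Filter Set

noncomputable section

/-- The set of infinite paths of the graph with edge set `E`, range map `r` and
source map `s`, viewed inside `Σ_{E}`. -/
def pathsInf {V E : Type*} (r s : E → V) : Set (Sig E) :=
  {x | Sig.len x = ⊤ ∧ ∀ n, ∀ a b : E, x.1 n = some a → x.1 (n + 1) = some b → r a = s b}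


namespace Stmt14Aux

open Sig OnePoint

variable {A : Type*}

lemma sig_ext {x y : Sig A} (h : ∀ n, x.1 n = y.1 n) : x = y := Subtype.ext (funext h)

lemma none_mono (x : Sig A) {m n : ℕ} (hmn : m ≤ n) (h : x.1 m = none) : x.1 n = none := by
  induction n with
  | zero => simpa [Nat.le_zero.mp hmn] using h
  | succ k ih =>
    rcases Nat.lt_or_ge m (k+1) with h1 | h1
    · exact x.2 k (ih (Nat.lt_succ_iff.mp h1))
    · have : m = k + 1 := le_antisymm hmn h1
      simpa [← this] using h

lemma len_eq_top_iff (x : Sig A) : Sig.len x = ⊤ ↔ ∀ n, x.1 n ≠ none := by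
  constructor
  · intro h n hn
    have : ((n : ℕ∞)) ∈ {n : ℕ∞ | ∃ k : ℕ, n = (k : ℕ∞) ∧ x.1 k = none} := ⟨n, rfl, hn⟩
    have := sInf_le this
    rw [Sig.len] at h
    rw [h] at this
    exact (ENat.coe_ne_top n) (top_le_iff.mp this)
  · intro h
    rw [Sig.len, sInf_eq_top]
    rintro a ⟨k, rfl, hk⟩
    exact absurd hk (h k)

lemma len_ne_top_of_none {x : Sig A} {n : ℕ} (h : x.1 n = none) : Sig.len x ≠ ⊤ := by
  intro htop
  exact (len_eq_top_iff x).mp htop n h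

lemma ofList_val (w : List A) (n : ℕ) : (Sig.ofList w).1 n = w[n]? := rfl

lemma ofList_inj {w w' : List A} (h : Sig.ofList w = Sig.ofList w') : w = w' := by
  apply List.ext_getElem?
  intro n
  have := congrArg (fun z : Sig A => z.1 n) h
  simpa [ofList_val] using this

lemma ofList_nil : (Sig.ofList ([] : List A)) = Sig.nil := by
  apply sig_ext; intro n; simp [ofList_val, Sig.nil]

lemma shift_nil : Sig.shift (Sig.nil : Sig A) = Sig.nil := rfl

lemma shift_ofList (w : List A) : Sig.shift (Sig.ofList w) = Sig.ofList w.tail := by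
  apply sig_ext; intro n
  simp [Sig.shift, ofList_val, List.getElem?_tail]

/-- A finite sequence is `ofList` of its prefix list. -/
lemma exists_ofList {x : Sig A} (hfin : Sig.len x ≠ ⊤) :
    ∃ w : List A, x = Sig.ofList w := by
  have hex : ∃ n, x.1 n = none := by
    by_contra h
    push_neg at h
    exact hfin ((len_eq_top_iff x).mpr fun n hn => h n hn)
  classical
  set n := Nat.find hex with hn
  have hnone : x.1 n = none := Nat.find_spec hex
  have hlt : ∀ i < n, x.1 i ≠ none := fun i hi => Nat.find_min hex hi
  refine ⟨List.ofFn (fun i : Fin n => (x.1 i).get (Option.ne_none_iff_isSome.mp (hlt i i.2))), ?_⟩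
  apply sig_ext
  intro j
  rcases Nat.lt_or_ge j n with hj | hj
  · rw [ofList_val]
    rw [List.getElem?_eq_getElem (by simpa using hj)]
    simp [hj]
  · rw [ofList_val, List.getElem?_eq_none (by simpa using hj)]
    exact none_mono x hj hnone

end Stmt14Aux
namespace Stmt14Aux

open Sig Set

variable {A : Type*}

open Classical in
lemma Q_val (z : XA A) (n : ℕ) :
    (Sig.Q z).1 n = if ∃ i ≤ n, z i = OnePoint.infty then none else Sig.toOpt (z n) := rfl

lemma toOpt_infty : Sig.toOpt (OnePoint.infty : OnePoint A) = none := rfl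

lemma toOpt_eq_some_iff {y : OnePoint A} {a : A} : Sig.toOpt y = Option.some a ↔ y = OnePoint.some a :=
  Iff.rfl

lemma toOpt_ne_none_iff {y : OnePoint A} : Sig.toOpt y ≠ none ↔ y ≠ OnePoint.infty := Iff.rfl

lemma Q_val_of_coe (z : XA A) (n : ℕ) (h : ∀ i ≤ n, z i ≠ OnePoint.infty) :
    (Sig.Q z).1 n = Sig.toOpt (z n) := by
  classical
  rw [Q_val, if_neg (by push_neg; exact h)]

lemma Q_val_some_iff (z : XA A) (n : ℕ) (a : A) :
    (Sig.Q z).1 n = Option.some a ↔ (∀ i ≤ n, z i ≠ OnePoint.infty) ∧ Sig.toOpt (z n) = Option.some a := by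
  classical
  constructor
  · intro h
    rw [Q_val] at h
    by_cases hc : ∃ i ≤ n, z i = OnePoint.infty
    · rw [if_pos hc] at h; exact absurd h (by simp)
    · rw [if_neg hc] at h
      push_neg at hc
      exact ⟨hc, h⟩
  · rintro ⟨h1, h2⟩
    rw [Q_val_of_coe z n h1]; exact h2

lemma Q_val_none_of_infty (z : XA A) {i n : ℕ} (hi : i ≤ n) (h : z i = OnePoint.infty) :
    (Sig.Q z).1 n = none := by
  classical
  rw [Q_val, if_pos ⟨i, hi, h⟩]

end Stmt14Aux
namespace Stmt14Aux

open Sig Set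

variable {A : Type*}

lemma isOpen_sig_iff {U : Set (Sig A)} : IsOpen U ↔ IsOpen (Sig.Q ⁻¹' U) :=
  isOpen_coinduced

lemma continuous_Q : Continuous (Sig.Q : XA A → Sig A) :=
  continuous_coinduced_rng

def U1 (k : ℕ) (a b : A) : Set (Sig A) :=
  {y | y.1 k = Option.some a ∧ y.1 (k+1) = Option.some b}

lemma isOpen_U1 (k : ℕ) (a b : A) : IsOpen (U1 k a b) := by
  letI : TopologicalSpace A := ⊥
  haveI : DiscreteTopology A := ⟨rfl⟩
  rw [isOpen_sig_iff]
  have heq : Sig.Q ⁻¹' (U1 k a b) =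
      (⋂ i : Fin (k+2), (fun z : XA A => z i) ⁻¹' ({OnePoint.infty}ᶜ)) ∩
      (((fun z : XA A => z k) ⁻¹' {OnePoint.some a}) ∩
      ((fun z : XA A => z (k+1)) ⁻¹' {OnePoint.some b})) := by
    ext z
    simp only [mem_preimage, mem_iInter, mem_inter_iff, mem_compl_iff, mem_singleton_iff, U1,
      mem_setOf_eq, Q_val_some_iff]
    constructor
    · rintro ⟨⟨h1, h2⟩, h3, h4⟩
      exact ⟨fun i => h3 i.1 (Nat.lt_succ_iff.mp i.2), h2, h4⟩
    · rintro ⟨h0, h2, h4⟩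
      refine ⟨⟨fun i hi => h0 ⟨i, by omega⟩, h2⟩, fun i hi => h0 ⟨i, by omega⟩, h4⟩
  rw [heq]
  refine IsOpen.inter (isOpen_iInter_of_finite fun i => ?_) (IsOpen.inter ?_ ?_)
  · exact (OnePoint.isClosed_infty.isOpen_compl).preimage (continuous_apply _)
  · have : IsOpen ({OnePoint.some a} : Set (OnePoint A)) := by
      rw [← Set.image_singleton]
      exact OnePoint.isOpen_image_coe.mpr (isOpen_discrete _)
    exact this.preimage (continuous_apply _)
  · have : IsOpen ({OnePoint.some b} : Set (OnePoint A)) := by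
      rw [← Set.image_singleton]
      exact OnePoint.isOpen_image_coe.mpr (isOpen_discrete _)
    exact this.preimage (continuous_apply _)

lemma U1_disj {V E : Type*} (r s : E → V) {k : ℕ} {a b : E} (hab : r a ≠ s b) :
    pathsInf r s ∩ U1 k a b = ∅ := by
  ext y
  simp only [mem_inter_iff, mem_empty_iff_false, iff_false, not_and]
  rintro ⟨_, hchain⟩ ⟨h1, h2⟩
  exact hab (hchain k a b h1 h2)

def U2 (w : List A) (G : Set A) : Set (Sig A) :=
  {y | (∀ i, (h : i < w.length) → y.1 i = Option.some w[i]) ∧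
    ∀ e ∈ G, y.1 w.length ≠ Option.some e}

lemma isOpen_U2 (w : List A) (G : Set A) (hG : G.Finite) : IsOpen (U2 w G) := by
  letI : TopologicalSpace A := ⊥
  haveI : DiscreteTopology A := ⟨rfl⟩
  rw [isOpen_sig_iff]
  have heq : Sig.Q ⁻¹' (U2 w G) =
      (⋂ i : Fin w.length, (fun z : XA A => z i.1) ⁻¹' {OnePoint.some w[i.1]}) ∩
      ((fun z : XA A => z w.length) ⁻¹' (OnePoint.some '' G)ᶜ) := by
    ext z
    simp only [mem_preimage, mem_iInter, mem_inter_iff, mem_compl_iff, U2, mem_setOf_eq,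
      mem_singleton_iff]
    constructor
    · rintro ⟨h1, h2⟩
      have hpin : ∀ i : Fin w.length, z i.1 = OnePoint.some w[i.1] := by
        intro i
        exact ((Q_val_some_iff z i.1 _).mp (h1 i.1 i.2)).2
      refine ⟨hpin, ?_⟩
      rintro ⟨e, heG, hze⟩
      refine h2 e heG ?_
      refine (Q_val_some_iff z w.length e).mpr ⟨?_, hze.symm ▸ rfl⟩
      intro i hi
      rcases Nat.lt_or_ge i w.length with h | h
      · rw [hpin ⟨i, h⟩]
        exact fun hc => OnePoint.coe_ne_infty _ hc
      · have : i = w.length := le_antisymm hi h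
        rw [this, ← hze]
        exact fun hc => OnePoint.coe_ne_infty _ hc
    · rintro ⟨h1, h2⟩
      have hQ : ∀ i, (h : i < w.length) → (Sig.Q z).1 i = Option.some w[i] := by
        intro i hi
        refine (Q_val_some_iff z i _).mpr ⟨?_, (h1 ⟨i, hi⟩) ▸ rfl⟩
        intro j hj
        rw [h1 ⟨j, lt_of_le_of_lt hj hi⟩]
        exact fun hc => OnePoint.coe_ne_infty _ hc
      refine ⟨hQ, ?_⟩
      intro e heG hc
      have := (Q_val_some_iff z w.length e).mp hc
      exact h2 ⟨e, heG, this.2.symm⟩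
  rw [heq]
  refine IsOpen.inter (isOpen_iInter_of_finite fun i => ?_) ?_
  · have : IsOpen ({OnePoint.some w[i.1]} : Set (OnePoint A)) := by
      rw [← Set.image_singleton]
      exact OnePoint.isOpen_image_coe.mpr (isOpen_discrete _)
    exact this.preimage (continuous_apply _)
  · have : IsOpen ((OnePoint.some '' G)ᶜ : Set (OnePoint A)) :=
      OnePoint.isOpen_compl_image_coe.mpr ⟨isClosed_discrete _, hG.isCompact⟩
    exact this.preimage (continuous_apply _)

end Stmt14Aux
namespace Stmt14Aux

open Sig Set

section Rec
open Classical

variable {E : Type*} [Nonempty E]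

noncomputable instance : Nonempty (ℕ → E) := ⟨fun _ => Classical.arbitrary E⟩

noncomputable def pick (S : Set (ℕ → E)) (n : ℕ) (g : E) : ℕ → E :=
  if h : ∃ p ∈ S, p n = g then h.choose else Classical.arbitrary _

lemma pick_mem {S : Set (ℕ → E)} {n : ℕ} {g : E} (h : ∃ p ∈ S, p n = g) :
    pick S n g ∈ S := by
  rw [pick, dif_pos h]; exact h.choose_spec.1

lemma pick_val {S : Set (ℕ → E)} {n : ℕ} {g : E} (h : ∃ p ∈ S, p n = g) :
    pick S n g n = g := by
  rw [pick, dif_pos h]; exact h.choose_spec.2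

noncomputable def step (S : Set (ℕ → E)) (n : ℕ) : Set (ℕ → E) :=
  if ((fun p => p n) '' S).Infinite then pick S n '' ((fun p => p n) '' S)
  else if h : ∃ g : E, {p ∈ S | p n = g}.Infinite then {p ∈ S | p n = h.choose} else S

noncomputable def tval (S : Set (ℕ → E)) (n : ℕ) : OnePoint E :=
  if ((fun p => p n) '' S).Infinite then OnePoint.infty
  else if h : ∃ g : E, {p ∈ S | p n = g}.Infinite then OnePoint.some h.choose
  else OnePoint.infty

lemma step_subset (S : Set (ℕ → E)) (n : ℕ) : step S n ⊆ S := by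
  rw [step]
  split_ifs with h1 h2
  · rintro q ⟨g, hg, rfl⟩
    exact pick_mem (by simpa using hg)
  · exact fun q hq => hq.1
  · exact fun q hq => hq

lemma bigFiber_exists {S : Set (ℕ → E)} (hS : S.Infinite) {n : ℕ}
    (hfin : ¬ ((fun p => p n) '' S).Infinite) : ∃ g : E, {p ∈ S | p n = g}.Infinite := by
  by_contra hno
  push_neg at hno
  simp only [Set.not_infinite] at hno hfin
  have : S ⊆ ⋃ g ∈ (fun p => p n) '' S, {p ∈ S | p n = g} := by
    intro p hp
    exact Set.mem_biUnion (Set.mem_image_of_mem _ hp) ⟨hp, rfl⟩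
  exact hS ((hfin.biUnion (fun g _ => hno g)).subset this)

lemma step_infinite {S : Set (ℕ → E)} (hS : S.Infinite) (n : ℕ) : (step S n).Infinite := by
  rw [step]
  split_ifs with h1 h2
  · rw [Set.infinite_image_iff]
    · exact h1
    · intro g1 hg1 g2 hg2 heq
      have e1 : pick S n g1 n = g1 := pick_val (by simpa using hg1)
      have e2 : pick S n g2 n = g2 := pick_val (by simpa using hg2)
      rw [← e1, ← e2, heq]
  · exact h2.choose_spec
  · exact hS

lemma step_inj {S : Set (ℕ → E)} (hS : S.Infinite) {n : ℕ}
    (h : tval S n = OnePoint.infty) : Set.InjOn (fun p => p n) (step S n) := by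
  rw [tval] at h
  rw [step]
  split_ifs at h ⊢ with h1 h2
  · rintro q1 ⟨g1, hg1, rfl⟩ q2 ⟨g2, hg2, rfl⟩ heq
    have e1 : pick S n g1 n = g1 := pick_val (by simpa using hg1)
    have e2 : pick S n g2 n = g2 := pick_val (by simpa using hg2)
    simp only at heq
    rw [e1, e2] at heq
    rw [heq]
  · exact absurd h (OnePoint.coe_ne_infty _)
  · exact absurd (bigFiber_exists hS h1) h2

lemma step_const {S : Set (ℕ → E)} {n : ℕ} {g : E}
    (h : tval S n = OnePoint.some g) : ∀ p ∈ step S n, p n = g := by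
  rw [tval] at h
  rw [step]
  split_ifs at h ⊢ with h1 h2
  · exact absurd h (OnePoint.infty_ne_coe _)
  · intro p hp
    rw [hp.2]
    exact Option.some_injective _ h
  · exact absurd h (OnePoint.infty_ne_coe _)

variable (P₀ : Set (ℕ → E))

noncomputable def fam : ℕ → Set (ℕ → E)
  | 0 => P₀
  | (n+1) => step (fam n) n

noncomputable def tseq (n : ℕ) : OnePoint E := tval (fam P₀ n) n

lemma fam_infinite (hP : P₀.Infinite) : ∀ n, (fam P₀ n).Infinite
  | 0 => hP
  | (n+1) => step_infinite (fam_infinite hP n) n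

lemma fam_mono {m n : ℕ} (h : m ≤ n) : fam P₀ n ⊆ fam P₀ m := by
  induction n with
  | zero => simpa [Nat.le_zero.mp h] using subset_rfl
  | succ k ih =>
    rcases Nat.lt_or_ge m (k+1) with h1 | h1
    · exact ((step_subset _ _).trans (ih (Nat.lt_succ_iff.mp h1)))
    · have : m = k + 1 := le_antisymm h h1
      rw [this]
  -- subset of fam (k+1) = step (fam k) k

lemma fam_subset_base (n : ℕ) : fam P₀ n ⊆ P₀ := fam_mono P₀ (Nat.zero_le n)

lemma exists_good (hP : P₀.Infinite) (N : ℕ) (F : Set E) (hF : F.Finite) :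
    ∃ p ∈ P₀, ∀ i < N, (tseq P₀ i = OnePoint.infty → p i ∉ F) ∧
      (∀ g : E, tseq P₀ i = OnePoint.some g → p i = g) := by
  classical
  set bad : Set (ℕ → E) :=
    ⋃ i ∈ Finset.range N, {p ∈ fam P₀ N | tseq P₀ i = OnePoint.infty ∧ p i ∈ F} with hbad
  have hbadfin : bad.Finite := by
    refine Set.Finite.biUnion (Finset.finite_toSet _) ?_
    intro i hi
    simp only [Finset.mem_coe, Finset.mem_range] at hi
    by_cases ht : tseq P₀ i = OnePoint.infty
    · have hinj : Set.InjOn (fun p => p i) (fam P₀ (i+1)) :=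
        step_inj (fam_infinite P₀ hP i) ht
      have hinj' : Set.InjOn (fun p => p i) {p ∈ fam P₀ N | tseq P₀ i = OnePoint.infty ∧ p i ∈ F} := by
        intro a ha b hb hab
        exact hinj (fam_mono P₀ hi ha.1) (fam_mono P₀ hi hb.1) hab
      refine Set.Finite.of_finite_image ?_ hinj'
      refine hF.subset ?_
      rintro x ⟨p, hp, rfl⟩
      exact hp.2.2
    · convert Set.finite_empty
      ext p
      simp only [mem_setOf_eq, mem_empty_iff_false, iff_false]
      rintro ⟨_, h, _⟩
      exact ht h
  obtain ⟨p, hp⟩ := ((fam_infinite P₀ hP N).diff hbadfin).nonempty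
  refine ⟨p, fam_subset_base P₀ N hp.1, ?_⟩
  intro i hi
  constructor
  · intro ht hpF
    exact hp.2 (Set.mem_biUnion (Finset.mem_range.mpr hi) ⟨hp.1, ht, hpF⟩)
  · intro g hg
    exact step_const hg p (fam_mono P₀ hi hp.1)

lemma tseq_zero (hP : P₀.Infinite)
    (hdist : ∀ p ∈ P₀, ∀ q ∈ P₀, p 0 = q 0 → p = q) :
    tseq P₀ 0 = OnePoint.infty := by
  rw [tseq, tval, if_pos]
  rw [Set.infinite_image_iff]
  · exact hP
  · intro a ha b hb hab
    exact hdist a ha b hb hab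

end Rec

end Stmt14Aux
namespace Stmt14Aux

open Sig Set

section Graph

variable {V E : Type*} (r s : E → V)

def chainSeq (p : ℕ → E) : Prop := ∀ n, r (p n) = s (p (n+1))

def Tset : Set (XA E) := {z | ∃ p : ℕ → E, chainSeq r s p ∧ ∀ n, z n = OnePoint.some (p n)}

lemma Q_mem_pathsInf {z : XA E} (hz : z ∈ Tset r s) : Sig.Q z ∈ pathsInf r s := by
  obtain ⟨p, hp, hzp⟩ := hz
  have hQ : ∀ n, (Sig.Q z).1 n = Option.some (p n) := by
    intro n
    refine (Q_val_some_iff z n (p n)).mpr ⟨?_, (hzp n) ▸ rfl⟩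
    intro i _
    rw [hzp i]
    exact OnePoint.coe_ne_infty _
  constructor
  · rw [len_eq_top_iff]
    intro n
    rw [hQ n]
    simp
  · intro n a b ha hb
    rw [hQ n] at ha
    rw [hQ (n+1)] at hb
    obtain rfl : p n = a := Option.some_injective _ ha
    obtain rfl : p (n+1) = b := Option.some_injective _ hb
    exact hp n

lemma Q_image_T_subset : Sig.Q '' Tset r s ⊆ pathsInf r s := by
  rintro x ⟨z, hz, rfl⟩
  exact Q_mem_pathsInf r s hz

variable (hns : ∀ v : V, ∃ e : E, s e = v)

noncomputable def nxt (e : E) : E := (hns (r e)).choose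

lemma s_nxt (e : E) : s (nxt r s hns e) = r e := (hns (r e)).choose_spec

noncomputable def pathFrom (e : E) : ℕ → E := fun n => (nxt r s hns)^[n] e

lemma pathFrom_zero (e : E) : pathFrom r s hns e 0 = e := rfl

lemma pathFrom_chain (e : E) : chainSeq r s (pathFrom r s hns e) := by
  intro n
  have : pathFrom r s hns e (n+1) = nxt r s hns (pathFrom r s hns e n) :=
    Function.iterate_succ_apply' _ _ _
  rw [this]
  exact (s_nxt r s hns _).symm

/-- The key closure lemma. -/
lemma ofList_mem_closure [Infinite E]
    (w : List E)
    (P₀ : Set (ℕ → E)) (hP : P₀.Infinite)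
    (hchain : ∀ p ∈ P₀, chainSeq r s p)
    (hdist : ∀ p ∈ P₀, ∀ q ∈ P₀, p 0 = q 0 → p = q)
    (hjoin : ∀ p ∈ P₀, ∀ i, (h : i + 1 = w.length) → r (w[i]) = s (p 0))
    (hwch : ∀ i, (h : i + 1 < w.length) → r (w[i]) = s (w[i+1])) :
    Sig.ofList w ∈ closure (pathsInf r s) := by
  classical
  letI : TopologicalSpace E := ⊥
  haveI : DiscreteTopology E := ⟨rfl⟩
  haveI : Nonempty E := inferInstance
  set m := w.length with hm
  set t : ℕ → OnePoint E := tseq P₀ with ht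
  have ht0 : t 0 = OnePoint.infty := tseq_zero P₀ hP hdist
  set z : XA E := fun i => if h : i < m then OnePoint.some w[i] else t (i - m) with hz
  have hzlt : ∀ i, (h : i < m) → z i = OnePoint.some w[i] := by
    intro i h; rw [hz]; exact dif_pos h
  have hzge : ∀ i, m ≤ i → z i = t (i - m) := by
    intro i h; rw [hz]; exact dif_neg (by omega)
  have hQz : Sig.Q z = Sig.ofList w := by
    apply sig_ext
    intro n
    rcases Nat.lt_or_ge n m with h | h
    · rw [ofList_val, List.getElem?_eq_getElem (by omega)]
      refine (Q_val_some_iff z n _).mpr ⟨?_, (hzlt n h) ▸ rfl⟩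
      intro i hi
      rw [hzlt i (by omega)]
      exact OnePoint.coe_ne_infty _
    · rw [ofList_val, List.getElem?_eq_none (by omega)]
      refine Q_val_none_of_infty z h ?_
      rw [hzge m le_rfl, Nat.sub_self, ht0]
  have hclz : z ∈ closure (Tset r s) := by
    rw [mem_closure_iff]
    intro o ho hzo
    obtain ⟨I, u, hu, hIsub⟩ := isOpen_pi_iff.mp ho z hzo
    set N : ℕ := (I.sup id) + 1 with hN
    have hIN : ∀ i ∈ I, i < N := by
      intro i hi
      have h2 : i ≤ I.sup id := Finset.le_sup (f := id) hi
      omega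
    set F : Set E := ⋃ i ∈ (I : Set ℕ), {e : E | z i = OnePoint.infty ∧ OnePoint.some e ∉ u i}
      with hF
    have hFfin : F.Finite := by
      refine Set.Finite.biUnion I.finite_toSet ?_
      intro i hi
      simp only [Finset.mem_coe] at hi
      by_cases hzi : z i = OnePoint.infty
      · have h1 : IsOpen (u i) := (hu i hi).1
        have h2 : OnePoint.infty ∈ u i := hzi ▸ (hu i hi).2
        have hcpt : IsCompact ((OnePoint.some ⁻¹' u i : Set E)ᶜ) :=
          ((OnePoint.isOpen_iff_of_mem' h2).mp h1).1
        have : {e : E | z i = OnePoint.infty ∧ OnePoint.some e ∉ u i} ⊆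
            (OnePoint.some ⁻¹' u i)ᶜ := by
          intro e he
          exact he.2
        exact (hcpt.finite ⟨by infer_instance⟩).subset this
      · convert Set.finite_empty
        ext e
        simp only [mem_setOf_eq, mem_empty_iff_false, iff_false]
        rintro ⟨h, _⟩
        exact hzi h
    obtain ⟨p, hpP, hpgood⟩ := exists_good P₀ hP N F hFfin
    set full : ℕ → E := fun n => if h : n < m then w[n] else p (n - m) with hfull
    have hfl : ∀ n, (h : n < m) → full n = w[n] := fun n h => dif_pos h
    have hfg : ∀ n, m ≤ n → full n = p (n - m) := fun n h => dif_neg (by omega)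
    have hfullchain : chainSeq r s full := by
      intro n
      rcases Nat.lt_or_ge (n+1) m with h | h
      · rw [hfl n (by omega), hfl (n+1) h]
        exact hwch n h
      · rcases Nat.lt_or_ge n m with h2 | h2
        · have hnm : n + 1 = m := by omega
          rw [hfl n h2, hfg (n+1) h]
          have : (n+1) - m = 0 := by omega
          rw [this]
          exact hjoin p hpP n (by omega)
        · rw [hfg n h2, hfg (n+1) (by omega)]
          have : (n+1) - m = (n - m) + 1 := by omega
          rw [this]
          exact hchain p hpP (n - m)
    refine ⟨fun n => OnePoint.some (full n), hIsub ?_, ⟨full, hfullchain, fun n => rfl⟩⟩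
    intro i hi
    simp only
    rcases Nat.lt_or_ge i m with h | h
    · rw [hfl i h, ← hzlt i h]
      exact (hu i hi).2
    · rw [hfg i h]
      have him : i - m < N := by have := hIN i hi; omega
      rcases hpgood (i - m) him with ⟨hp1, hp2⟩
      cases hti : t (i - m) with
      | infty =>
        have hzi : z i = OnePoint.infty := by rw [hzge i h]; exact hti
        have hnF : p (i - m) ∉ F := hp1 (by rw [← ht]; exact hti)
        by_contra hnot
        exact hnF (Set.mem_biUnion (Finset.mem_coe.mpr hi) ⟨hzi, hnot⟩)
      | coe g =>
        have : p (i - m) = g := hp2 g (by rw [← ht]; exact hti)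
        rw [this, ← hti, ← hzge i h]
        exact (hu i hi).2
  have : Sig.Q z ∈ closure (Sig.Q '' Tset r s) :=
    (image_closure_subset_closure_image continuous_Q) ⟨z, hclz, rfl⟩
  rw [hQz] at this
  exact closure_mono (Q_image_T_subset r s) this

end Graph

end Stmt14Aux
namespace Stmt14Aux

open Sig Set

section Main

variable {V E : Type*} (r s : E → V)

lemma U2_disj (w : List E) (hw : w ≠ [])
    (hwch : ∀ i, (h : i + 1 < w.length) → r (w[i]) = s (w[i+1])) :
    pathsInf r s ∩ U2 w {e : E | s e = r (w.getLast hw)} = ∅ := by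
  ext y
  simp only [mem_inter_iff, mem_empty_iff_false, iff_false, not_and]
  rintro ⟨hlen, hchain⟩ ⟨h1, h2⟩
  have hm : 0 < w.length := List.length_pos_iff.mpr hw
  obtain ⟨e, he⟩ : ∃ e, y.1 w.length = Option.some e := by
    have := (len_eq_top_iff y).mp hlen w.length
    cases hy : y.1 w.length with
    | none => exact absurd hy this
    | some e => exact ⟨e, rfl⟩
  have hprev : y.1 (w.length - 1) = Option.some (w[w.length - 1]) := h1 _ (by omega)
  have hchain' : r (w[w.length - 1]) = s e := by
    have := hchain (w.length - 1) _ _ hprev (by rw [Nat.sub_add_cancel hm]; exact he)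
    exact this
  refine h2 e ?_ he
  rw [mem_setOf_eq, List.getLast_eq_getElem]
  exact hchain'.symm

def glue (w : List E) (p : ℕ → E) : ℕ → E :=
  fun n => if h : n < w.length then w[n] else p (n - w.length)

lemma glue_lt (w : List E) (p : ℕ → E) {n : ℕ} (h : n < w.length) : glue w p n = w[n] :=
  dif_pos h

lemma glue_ge (w : List E) (p : ℕ → E) {n : ℕ} (h : w.length ≤ n) :
    glue w p n = p (n - w.length) := dif_neg (by omega)

lemma glue_chain (w : List E) (p : ℕ → E)
    (hwch : ∀ i, (h : i + 1 < w.length) → r (w[i]) = s (w[i+1]))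
    (hjoin : ∀ i, (h : i + 1 = w.length) → r (w[i]) = s (p 0))
    (hp : chainSeq r s p) : chainSeq r s (glue w p) := by
  intro n
  rcases Nat.lt_or_ge (n+1) w.length with h | h
  · rw [glue_lt w p (by omega), glue_lt w p h]
    exact hwch n h
  · rcases Nat.lt_or_ge n w.length with h2 | h2
    · have hnm : n + 1 = w.length := by omega
      rw [glue_lt w p h2, glue_ge w p h]
      have : (n+1) - w.length = 0 := by omega
      rw [this]
      exact hjoin n hnm
    · rw [glue_ge w p h2, glue_ge w p (by omega)]
      have : (n+1) - w.length = (n - w.length) + 1 := by omega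
      rw [this]
      exact hp (n - w.length)

lemma Q_coe_val (p : ℕ → E) (n : ℕ) :
    (Sig.Q (fun i => (OnePoint.some (p i) : OnePoint E))).1 n = Option.some (p n) := by
  refine (Q_val_some_iff _ n (p n)).mpr ⟨fun i _ => OnePoint.coe_ne_infty _, rfl⟩

/-- The element of `pathsInf` obtained from a chain sequence. -/
noncomputable def ofChain (p : ℕ → E) : Sig E := Sig.Q (fun i => (OnePoint.some (p i) : OnePoint E))

lemma ofChain_mem (p : ℕ → E) (hp : chainSeq r s p) : ofChain p ∈ pathsInf r s :=
  Q_mem_pathsInf r s ⟨p, hp, fun n => rfl⟩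

/-- The right-hand side set of the theorem. -/
def RHS : Set (Sig E) :=
  pathsInf r s ∪
    {x : Sig E | ∃ (w : List E) (f : E), x = Sig.ofList w ∧ w.getLast? = some f ∧
      List.Chain' (fun e e' => r e = s e') w ∧ {e : E | s e = r f}.Infinite} ∪
    {Sig.nil}

lemma chain'_iff (w : List E) :
    List.Chain' (fun e e' => r e = s e') w ↔
      ∀ i, (h : i + 1 < w.length) → r (w[i]) = s (w[i+1]) := by
  rw [show List.Chain' (fun e e' => r e = s e') w ↔ List.IsChain (fun e e' => r e = s e') w from Iff.rfl,
    List.isChain_iff_getElem]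

theorem closure_eq (hns : ∀ v : V, ∃ e : E, s e = v) [Infinite E] :
    closure (pathsInf r s) = RHS r s := by
  apply Set.Subset.antisymm
  · -- closure ⊆ RHS
    intro x hx
    by_cases hlen : Sig.len x = ⊤
    · left; left
      refine ⟨hlen, ?_⟩
      intro n a b ha hb
      by_contra hab
      obtain ⟨y, hy1, hy2⟩ := mem_closure_iff.mp hx (U1 n a b) (isOpen_U1 n a b) ⟨ha, hb⟩
      have := U1_disj r s (k := n) hab
      rw [Set.eq_empty_iff_forall_notMem] at this
      exact this y ⟨hy2, hy1⟩
    · obtain ⟨w, rfl⟩ := exists_ofList hlen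
      rcases eq_or_ne w [] with rfl | hw
      · right
        rw [ofList_nil]
        rfl
      · left; right
        have hm : 0 < w.length := List.length_pos_iff.mpr hw
        have hwch : ∀ i, (h : i + 1 < w.length) → r (w[i]) = s (w[i+1]) := by
          intro i hi
          by_contra hab
          obtain ⟨y, hy1, hy2⟩ := mem_closure_iff.mp hx (U1 i w[i] w[i+1])
            (isOpen_U1 _ _ _)
            ⟨by rw [ofList_val, List.getElem?_eq_getElem (by omega)],
             by rw [ofList_val, List.getElem?_eq_getElem hi]⟩
          have := U1_disj r s (k := i) hab
          rw [Set.eq_empty_iff_forall_notMem] at this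
          exact this y ⟨hy2, hy1⟩
        have hinf : {e : E | s e = r (w.getLast hw)}.Infinite := by
          by_contra hfin
          rw [Set.not_infinite] at hfin
          obtain ⟨y, hy1, hy2⟩ := mem_closure_iff.mp hx
            (U2 w {e : E | s e = r (w.getLast hw)}) (isOpen_U2 _ _ hfin)
            ⟨fun i h => by rw [ofList_val, List.getElem?_eq_getElem h],
             fun e _ => by rw [ofList_val, List.getElem?_eq_none le_rfl]; simp⟩
          have := U2_disj r s w hw hwch
          rw [Set.eq_empty_iff_forall_notMem] at this
          exact this y ⟨hy2, hy1⟩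
        exact ⟨w, w.getLast hw, rfl, List.getLast?_eq_getLast_of_ne_nil hw,
          (chain'_iff r s w).mpr hwch, hinf⟩
  · -- RHS ⊆ closure
    rintro x ((hx | hx) | hx)
    · exact subset_closure hx
    · obtain ⟨w, f, rfl, hlast, hch, hinf⟩ := hx
      have hw : w ≠ [] := by
        rintro rfl
        simp at hlast
      have hfval : f = w.getLast hw := by
        have := List.getLast?_eq_getLast_of_ne_nil hw
        rw [hlast] at this
        exact Option.some_injective _ this
      refine ofList_mem_closure r s w
        (pathFrom r s hns '' {e : E | s e = r f}) ?_ ?_ ?_ ?_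
        ((chain'_iff r s w).mp hch)
      · refine (Set.infinite_image_iff ?_).mpr hinf
        intro a _ b _ hab
        have : pathFrom r s hns a 0 = pathFrom r s hns b 0 := by rw [hab]
        simpa [pathFrom_zero] using this
      · rintro p ⟨e, _, rfl⟩
        exact pathFrom_chain r s hns e
      · rintro p ⟨e, _, rfl⟩ q ⟨e', _, rfl⟩ h0
        simp only [pathFrom_zero] at h0
        rw [h0]
      · rintro p ⟨e, he, rfl⟩ i hi
        rw [pathFrom_zero, he]
        congr 1
        rw [hfval, List.getLast_eq_getElem]
        congr 1
        omega
    · rw [mem_singleton_iff] at hx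
      subst hx
      rw [← ofList_nil]
      refine ofList_mem_closure r s []
        (Set.range (pathFrom r s hns)) ?_ ?_ ?_ ?_ ?_
      · refine Set.infinite_range_of_injective ?_
        intro a b hab
        have : pathFrom r s hns a 0 = pathFrom r s hns b 0 := by rw [hab]
        simpa [pathFrom_zero] using this
      · rintro p ⟨e, rfl⟩
        exact pathFrom_chain r s hns e
      · rintro p ⟨e, rfl⟩ q ⟨e', rfl⟩ h0
        simp only [pathFrom_zero] at h0
        rw [h0]
      · rintro p _ i hi
        simp at hi
      · intro i hi
        simp at hi

end Main

end Stmt14Aux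
namespace Stmt14Aux

open Sig Set

section Shift

variable {V E : Type*} (r s : E → V)

lemma shift_mem_RHS {x : Sig E} (hx : x ∈ RHS r s) : Sig.shift x ∈ RHS r s := by
  rcases hx with (hx | hx) | hx
  · left; left
    obtain ⟨h1, h2⟩ := hx
    constructor
    · rw [len_eq_top_iff] at h1 ⊢
      intro n
      exact h1 (n+1)
    · intro n a b ha hb
      exact h2 (n+1) a b ha hb
  · obtain ⟨w, f, rfl, hlast, hch, hinf⟩ := hx
    rw [shift_ofList]
    match w with
    | [] => simp at hlast
    | [a] =>
      right
      simp only [List.tail_cons]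
      rw [ofList_nil]
      rfl
    | a :: b :: l =>
      left; right
      rw [List.getLast?_cons_cons] at hlast
      exact ⟨b :: l, f, rfl, hlast, hch.tail, hinf⟩
  · rw [mem_singleton_iff] at hx
    subst hx
    right
    rw [shift_nil]
    rfl

lemma extension_property (hns : ∀ v : V, ∃ e : E, s e = v) [Infinite E]
    {w : List E} (hw : Sig.ofList w ∈ RHS r s) :
    {a : E | (closure (pathsInf r s) ∩ Sig.cyl (w ++ [a])).Nonempty}.Infinite := by
  rcases hw with (hw | hw) | hw
  · exfalso
    refine len_ne_top_of_none (x := Sig.ofList w) (n := w.length) ?_ hw.1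
    rw [ofList_val]
    exact List.getElem?_eq_none le_rfl
  · obtain ⟨w', f, heq, hlast, hch, hinf⟩ := hw
    obtain rfl : w = w' := ofList_inj heq
    have hw0 : w ≠ [] := by rintro rfl; simp at hlast
    have hfval : f = w.getLast hw0 := by
      have := List.getLast?_eq_getLast_of_ne_nil hw0
      rw [hlast] at this
      exact Option.some_injective _ this
    refine Set.Infinite.mono ?_ hinf
    intro e he
    set p : ℕ → E := pathFrom r s hns e with hp
    have hjoin : ∀ i, (h : i + 1 = w.length) → r (w[i]) = s (p 0) := by
      intro i hi
      rw [hp, pathFrom_zero, he, hfval, List.getLast_eq_getElem]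
      congr 2
      omega
    have hchain : chainSeq r s (glue w p) :=
      glue_chain r s w p ((chain'_iff r s w).mp hch) hjoin (pathFrom_chain r s hns e)
    refine ⟨ofChain (glue w p), subset_closure (ofChain_mem r s _ hchain), ?_⟩
    intro i hi
    rw [List.length_append, List.length_singleton] at hi
    show (ofChain (glue w p)).1 i = _
    rw [ofChain, Q_coe_val]
    rcases Nat.lt_or_ge i w.length with h | h
    · rw [glue_lt w p h, List.getElem?_append_left h, List.getElem?_eq_getElem h]
    · have : i = w.length := by omega
      subst this
      rw [glue_ge w p le_rfl, Nat.sub_self, List.getElem?_concat_length]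
      rw [hp, pathFrom_zero]
  · rw [mem_singleton_iff] at hw
    obtain rfl : w = [] := ofList_inj (hw.trans ofList_nil.symm)
    have : {a : E | (closure (pathsInf r s) ∩ Sig.cyl ([] ++ [a])).Nonempty} = Set.univ := by
      rw [Set.eq_univ_iff_forall]
      intro a
      refine ⟨ofChain (pathFrom r s hns a),
        subset_closure (ofChain_mem r s _ (pathFrom_chain r s hns a)), ?_⟩
      intro i hi
      simp only [List.nil_append, List.length_singleton] at hi
      obtain rfl : i = 0 := by omega
      show (ofChain (pathFrom r s hns a)).1 0 = _
      rw [ofChain, Q_coe_val, pathFrom_zero]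
      rfl
    rw [this]
    exact Set.infinite_univ
  
end Shift

end Stmt14Aux

/-- for a graph with no sinks and infinitely many edges, the closure
of the infinite path space equals the infinite paths together with the finite paths
of positive length ending at infinite emitters and the empty sequence, and this set
is a shift space over the edge alphabet. -/
theorem stmt14 (V E : Type*) (r s : E → V) (hnosinks : ∀ v : V, ∃ e : E, s e = v)
    [Infinite E] :
    closure (pathsInf r s) =
        (pathsInf r s ∪
          {x : Sig E | ∃ (w : List E) (f : E), x = Sig.ofList w ∧ w.getLast? = some f ∧
            List.Chain' (fun e e' => r e = s e') w ∧ {e : E | s e = r f}.Infinite} ∪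
          {Sig.nil}) ∧
      Sig.IsShiftSpace (closure (pathsInf r s)) := by
  have hceq := Stmt14Aux.closure_eq r s hnosinks
  constructor
  · exact hceq
  · refine ⟨isClosed_closure, ?_, ?_⟩
    · intro x hx
      rw [hceq] at hx ⊢
      exact Stmt14Aux.shift_mem_RHS r s hx
    · intro w hw
      rw [hceq] at hw
      exact Stmt14Aux.extension_property r s hnosinks hw
end
end

section
/- Let E be the graph with vertices v₁,v₂,… and edges eₙ from vₙ to v_{n+1}. Then the edge shift X_E is not a shift of finite type: for every finite set of blocks F ⊆ Σ_{E¹}^fin, X_E ≠ X_F. -/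
open Topology Filter Set

noncomputable section

open Classical in
private lemma sig_open_pair (a b : ℕ) :
    IsOpen {z : Sig ℕ | z.1 0 = some a ∧ z.1 1 = some b} := by
  letI : TopologicalSpace ℕ := ⊥
  haveI : DiscreteTopology ℕ := ⟨rfl⟩
  refine isOpen_coinduced.mpr ?_
  have key : Sig.Q ⁻¹' {z : Sig ℕ | z.1 0 = some a ∧ z.1 1 = some b}
      = (fun x : Sig.XA ℕ => x 0) ⁻¹' {(a : OnePoint ℕ)} ∩ (fun x : Sig.XA ℕ => x 1) ⁻¹' {(b : OnePoint ℕ)} := by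
    ext x
    simp only [Set.mem_preimage, Set.mem_setOf_eq, Sig.Q, Set.mem_inter_iff, Set.mem_singleton_iff]
    show (@ite _ (∃ i ≤ 0, x i = OnePoint.infty)
        (@Nat.decidableExistsLE _ (fun _ => Classical.propDecidable _) 0) none (Sig.toOpt (x 0)) = some a ∧
      @ite _ (∃ i ≤ 1, x i = OnePoint.infty)
        (@Nat.decidableExistsLE _ (fun _ => Classical.propDecidable _) 1) none (Sig.toOpt (x 1)) = some b) ↔
      x 0 = (a : OnePoint ℕ) ∧ x 1 = (b : OnePoint ℕ)
    constructor
    · rintro ⟨h0, h1⟩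
      by_cases hc1 : ∃ i ≤ 1, x i = OnePoint.infty
      · rw [if_pos hc1] at h1; exact absurd h1 (by simp)
      · have hc0 : ¬ ∃ i ≤ 0, x i = OnePoint.infty := by
          rintro ⟨i, hi, hx⟩; exact hc1 ⟨i, hi.trans (by norm_num), hx⟩
        rw [if_neg hc0] at h0
        rw [if_neg hc1] at h1
        exact ⟨h0, h1⟩
    · rintro ⟨h0, h1⟩
      have hni : ∀ i ≤ 1, x i ≠ OnePoint.infty := by
        intro i hi
        interval_cases i
        · rw [h0]; exact fun h => Option.some_ne_none a (show some a = none from h)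
        · rw [h1]; exact fun h => Option.some_ne_none b (show some b = none from h)
      rw [if_neg, if_neg]
      · exact ⟨h0, h1⟩
      · rintro ⟨i, hi, hx⟩; exact hni i hi hx
      · rintro ⟨i, hi, hx⟩; exact hni i (hi.trans (by norm_num)) hx
  rw [key]
  have hsing : ∀ c : ℕ, IsOpen {(c : OnePoint ℕ)} := by
    intro c
    rw [OnePoint.isOpen_iff_of_notMem (by simp)]
    exact isOpen_discrete _
  exact ((hsing a).preimage (continuous_apply 0)).inter
    ((hsing b).preimage (continuous_apply 1))

private lemma sig_len_top (x : Sig ℕ) (h : ∀ k, x.1 k ≠ none) : Sig.len x = ⊤ := by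
  have he : {n : ℕ∞ | ∃ k : ℕ, n = (k : ℕ∞) ∧ x.1 k = none} = ∅ := by
    ext n
    simp only [Set.mem_setOf_eq, Set.mem_empty_iff_false, iff_false]
    rintro ⟨k, -, hk⟩
    exact h k hk
  rw [Sig.len, he, sInf_empty]


/-- the edge shift of the infinite ray graph `• → • → • → ⋯`
(edge `n` goes from vertex `n` to vertex `n+1`) is not a shift of finite type. -/
theorem stmt16 (F : Set (List ℕ)) (hF : F.Finite) :
    closure (pathsInf (fun n : ℕ => n + 1) (fun n : ℕ => n)) ≠ Sig.XF F := by
  intro heq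
  by_cases hnil : [] ∈ F
  · -- the path n ↦ n is in the closure but not in X_F
    set x0 : Sig ℕ := ⟨fun n => some n, fun n h => by simp at h⟩ with hx0def
    have hx0 : x0 ∈ pathsInf (fun n : ℕ => n + 1) (fun n : ℕ => n) := by
      refine ⟨sig_len_top x0 (fun k => by simp [x0]), ?_⟩
      intro n a b ha hb
      have ha' : n = a := Option.some.inj ha
      have hb' : n + 1 = b := Option.some.inj hb
      show a + 1 = b
      omega
    have hx0F : x0 ∈ Sig.XF F := heq ▸ subset_closure hx0
    rcases hx0F with h | h
    · exact h.2 [] hnil ⟨0, by simp⟩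
    · obtain ⟨w, hw, -⟩ := h
      have h2 : x0.1 w.length = (Sig.ofList w).1 w.length := by rw [hw]
      simp [x0, Sig.ofList, List.getElem?_eq_none le_rfl] at h2
  · classical
    set T : Finset ℕ := hF.toFinset.biUnion (fun w => w.toFinset) with hT
    set a : ℕ := T.sup id + 1 with ha
    have hbig : ∀ w ∈ F, ∀ m ∈ w, m < a := by
      intro w hw m hm
      have hmT : m ∈ T := Finset.mem_biUnion.mpr
        ⟨w, hF.mem_toFinset.mpr hw, List.mem_toFinset.mpr hm⟩
      have := Finset.le_sup (f := id) hmT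
      simp only [id] at this
      omega
    set y : Sig ℕ := ⟨fun n => some (if n = 0 then a else a + 1 + n),
      fun n h => by simp at h⟩ with hydef
    have hyXF : y ∈ Sig.XF F := by
      refine Or.inl ⟨sig_len_top y (fun k => by simp [y]), ?_⟩
      rintro w hwF ⟨k, hk⟩
      have hwne : w ≠ [] := fun h => hnil (h ▸ hwF)
      have hlen : 0 < w.length := List.length_pos_iff.mpr hwne
      have h0 := hk 0 hlen
      have hv : w[0]? = some (if k = 0 then a else a + 1 + k) := by
        rw [← h0]; simp [y]
      have hmem : (if k = 0 then a else a + 1 + k) ∈ w := by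
        have h1 : w[0] = (if k = 0 then a else a + 1 + k) := by
          have := (List.getElem?_eq_some_iff.mp hv)
          exact this.2
        exact h1 ▸ List.getElem_mem hlen
      have := hbig w hwF _ hmem
      split_ifs at this <;> omega
    have hyncl : y ∉ closure (pathsInf (fun n : ℕ => n + 1) (fun n : ℕ => n)) := by
      intro hcl
      obtain ⟨z, hzU, hz⟩ := mem_closure_iff.mp hcl
        {z : Sig ℕ | z.1 0 = some a ∧ z.1 1 = some (a + 2)}
        (sig_open_pair a (a + 2)) (by constructor <;> simp [y])
      have h3 : a + 1 = a + 2 := hz.2 0 a (a + 2) hzU.1 hzU.2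
      omega
    exact hyncl (heq ▸ hyXF)
end
end

section
/- Let A be a countable alphabet, X and Y shift spaces over A with X row-finite, and φ : X → Y a sliding block code. Then φ is bounded (i.e., the window sizes n(a) are uniformly bounded over a ∈ A) if and only if the restriction of φ to X^inf is uniformly continuous with respect to the boundedness metric D(x,y) = 1/2^n where n is the smallest index with x_n ≠ y_n (and D(x,x)=0). -/
open Topology Filter Set

noncomputable section

/-- The block of length `m` of the sequence `x` starting at coordinate `i`. -/
def seg {A : Type*} (x : Sig A) (i m : ℕ) : List A :=
  (List.range m).filterMap (fun j => x.1 (i + j))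

/-- `n` and `Φ` are sliding block code data for `φ` on `X`: for every infinite
`x ∈ X`, `φ(x)ᵢ = Φ^{xᵢ}(xᵢ ⋯ x_{n(xᵢ)+i-1})`. -/
def SBCdata {A : Type*} (φ : Sig A → Sig A) (X : Set (Sig A))
    (n : A → ℕ) (Φ : A → List A → A) : Prop :=
  ∀ x ∈ X, Sig.len x = ⊤ →
    ∀ i, ∀ a : A, x.1 i = some a → (φ x).1 i = some (Φ a (seg x i (n a)))

open Classical in
/-- The boundedness metric `D` on infinite sequences. -/
noncomputable def Dmet {A : Type*} (x y : Sig A) : ℝ :=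
  if h : x = y then 0
  else (1 / 2 : ℝ) ^ Nat.find (p := fun n => x.1 n ≠ y.1 n) (by
    by_contra hc
    push_neg at hc
    exact h (Subtype.ext (funext fun n => hc n)))


section Aux

variable {A : Type*}

lemma len_top_iff (x : Sig A) : Sig.len x = ⊤ ↔ ∀ n, x.1 n ≠ none := by
  constructor
  · intro h n hn
    have h1 : Sig.len x ≤ (n : ℕ∞) := sInf_le ⟨n, rfl, hn⟩
    rw [h] at h1
    exact (ENat.coe_lt_top n).not_ge h1
  · intro h
    rw [Sig.len, sInf_eq_top]
    rintro a ⟨k, rfl, hk⟩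
    exact absurd hk (h k)

lemma shift_iter_apply (x : Sig A) (i m : ℕ) : (Sig.shift^[i] x).1 m = x.1 (m + i) := by
  induction i generalizing x with
  | zero => rfl
  | succ i ih =>
    rw [Function.iterate_succ_apply, ih]
    rfl

lemma shift_iter_mem {X : Set (Sig A)} (hX : ∀ x ∈ X, Sig.shift x ∈ X) (i : ℕ)
    (x : Sig A) (hx : x ∈ X) : Sig.shift^[i] x ∈ X := by
  induction i generalizing x with
  | zero => exact hx
  | succ i ih =>
    rw [Function.iterate_succ_apply]
    exact ih _ (hX x hx)

lemma seg_succ (x : Sig A) (i m : ℕ) (a : A) (ha : x.1 (i + m) = some a) :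
    seg x i (m + 1) = seg x i m ++ [a] := by
  unfold seg
  rw [List.range_succ, List.filterMap_append]
  simp [ha]

lemma seg_length (x : Sig A) (hx : ∀ n, x.1 n ≠ none) (i m : ℕ) :
    (seg x i m).length = m := by
  induction m with
  | zero => rfl
  | succ m ih =>
    obtain ⟨a, ha⟩ := Option.ne_none_iff_exists'.1 (hx (i + m))
    rw [seg_succ x i m a ha]
    simp [ih]

lemma seg_getElem? (x : Sig A) (hx : ∀ n, x.1 n ≠ none) (i m j : ℕ) (hj : j < m) :
    (seg x i m)[j]? = x.1 (i + j) := by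
  induction m with
  | zero => omega
  | succ m ih =>
    obtain ⟨a, ha⟩ := Option.ne_none_iff_exists'.1 (hx (i + m))
    rw [seg_succ x i m a ha]
    rcases Nat.lt_or_ge j m with h | h
    · rw [List.getElem?_append_left (by rw [seg_length x hx]; exact h)]
      exact ih h
    · have hjm : j = m := by omega
      subst hjm
      rw [List.getElem?_append_right (by rw [seg_length x hx])]
      rw [seg_length x hx]
      simp [ha]

lemma seg_ext (x y : Sig A) (hx : ∀ n, x.1 n ≠ none) (hy : ∀ n, y.1 n ≠ none)
    (i i' m : ℕ) (h : ∀ j < m, x.1 (i + j) = y.1 (i' + j)) :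
    seg x i m = seg y i' m := by
  apply List.ext_getElem?
  intro j
  rcases Nat.lt_or_ge j m with hj | hj
  · rw [seg_getElem? x hx i m j hj, seg_getElem? y hy i' m j hj]
    exact h j hj
  · rw [List.getElem?_eq_none (by rw [seg_length x hx]; exact hj),
      List.getElem?_eq_none (by rw [seg_length y hy]; exact hj)]

lemma exists_ne_of_ne {x y : Sig A} (h : x ≠ y) : ∃ m, x.1 m ≠ y.1 m := by
  by_contra hc
  push_neg at hc
  exact h (Subtype.ext (funext fun m => hc m))

open Classical in
lemma Dmet_le (x y : Sig A) (N : ℕ) (h : ∀ j ≤ N, x.1 j = y.1 j) :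
    Dmet x y ≤ (1 / 2 : ℝ) ^ (N + 1) := by
  unfold Dmet
  split_ifs with he
  · positivity
  · have hpf := exists_ne_of_ne he
    have hfind : N + 1 ≤ Nat.find hpf :=
      (Nat.le_find_iff hpf _).2 (fun m hm => not_not.2 (h m (by omega)))
    have hgoal : (1 / 2 : ℝ) ^ (Nat.find hpf) ≤ (1 / 2 : ℝ) ^ (N + 1) :=
      pow_le_pow_of_le_one (by norm_num) (by norm_num) hfind
    exact hgoal

open Classical in
lemma agree_of_Dmet_lt (x y : Sig A) (k : ℕ) (h : Dmet x y < (1 / 2 : ℝ) ^ k) :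
    ∀ j ≤ k, x.1 j = y.1 j := by
  intro j hj
  unfold Dmet at h
  split_ifs at h with he
  · rw [he]
  · have hpf := exists_ne_of_ne he
    have h' : (1 / 2 : ℝ) ^ (Nat.find hpf) < (1 / 2 : ℝ) ^ k := h
    by_contra hne
    have hle : Nat.find hpf ≤ j := Nat.find_le hne
    have : (1 / 2 : ℝ) ^ k ≤ (1 / 2 : ℝ) ^ (Nat.find hpf) :=
      pow_le_pow_of_le_one (by norm_num) (by norm_num) (by omega)
    linarith

end Aux

/-- a sliding block code on a row-finite shift space over a countable
alphabet is bounded iff its restriction to the infinite sequences is uniformly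
continuous with respect to the boundedness metric `D`. -/
theorem stmt19 (A : Type*) [Countable A] (X Y : Set (Sig A))
    (hX : Sig.IsShiftSpace X) (hY : Sig.IsShiftSpace Y) (hrf : Sig.RowFinite X)
    (φ : Sig A → Sig A) (hmap : Set.MapsTo φ X Y)
    (hzero : ∀ u : ℕ → Sig A, (∀ k, u k ∈ X) → Tendsto u atTop (𝓝 Sig.nil) →
      Tendsto (fun k => φ (u k)) atTop (𝓝 Sig.nil))
    (hsbc : ∃ (n : A → ℕ) (Φ : A → List A → A), (∀ a, 0 < n a) ∧ SBCdata φ X n Φ) :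
    (∃ (n : A → ℕ) (Φ : A → List A → A), (∀ a, 0 < n a) ∧ SBCdata φ X n Φ ∧
        ∃ M : ℕ, ∀ a, n a ≤ M) ↔
      ∀ ε > (0 : ℝ), ∃ δ > (0 : ℝ), ∀ x ∈ X, ∀ y ∈ X,
        Sig.len x = ⊤ → Sig.len y = ⊤ → Dmet x y < δ → Dmet (φ x) (φ y) < ε := by
  obtain ⟨n, Φ, hnpos0, hΦ⟩ := hsbc
  constructor
  · rintro ⟨n, Φ, hnpos, hsbc', M, hM⟩ ε hε
    obtain ⟨k, hk⟩ := exists_pow_lt_of_lt_one hε (by norm_num : (1 / 2 : ℝ) < 1)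
    refine ⟨(1 / 2 : ℝ) ^ (k + M), by positivity, ?_⟩
    intro x hx y hy hxl hyl hD
    have hagree := agree_of_Dmet_lt x y (k + M) hD
    have hxinf := (len_top_iff x).1 hxl
    have hyinf := (len_top_iff y).1 hyl
    have hφagree : ∀ i ≤ k, (φ x).1 i = (φ y).1 i := by
      intro i hi
      obtain ⟨a, ha⟩ := Option.ne_none_iff_exists'.1 (hxinf i)
      have hya : y.1 i = some a := by rw [← hagree i (by omega), ha]
      rw [hsbc' x hx hxl i a ha, hsbc' y hy hyl i a hya]
      have hseg : seg x i (n a) = seg y i (n a) := by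
        apply seg_ext x y hxinf hyinf
        intro j hj
        exact hagree (i + j) (by have := hM a; omega)
      rw [hseg]
    calc Dmet (φ x) (φ y) ≤ (1 / 2 : ℝ) ^ (k + 1) := Dmet_le _ _ k hφagree
      _ < (1 / 2 : ℝ) ^ k := by
          apply pow_lt_pow_right_of_lt_one₀ (by norm_num) (by norm_num)
          omega
      _ < ε := hk
  · intro hUC
    obtain ⟨δ, hδ, hU⟩ := hUC 1 one_pos
    obtain ⟨N, hN⟩ := exists_pow_lt_of_lt_one hδ (by norm_num : (1 / 2 : ℝ) < 1)
    classical
    refine ⟨fun _ => N + 1,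
      fun a w =>
        if h : ∃ z : Sig A, z ∈ X ∧ Sig.len z = ⊤ ∧ z.1 0 = some a ∧ seg z 0 (N + 1) = w
        then Φ a (seg h.choose 0 (n a)) else Φ a w,
      fun _ => N.succ_pos, ?_, N + 1, fun _ => le_rfl⟩
    intro x hxX hxl i a hxa
    have hxinf := (len_top_iff x).1 hxl
    set x' := Sig.shift^[i] x with hx'def
    have hx'X : x' ∈ X := shift_iter_mem hX.2.1 i x hxX
    have hx'inf : ∀ m, x'.1 m ≠ none := by
      intro m; rw [hx'def, shift_iter_apply]; exact hxinf _
    have hx'l : Sig.len x' = ⊤ := (len_top_iff x').2 hx'inf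
    have hx'a : x'.1 0 = some a := by
      rw [hx'def, shift_iter_apply]; simpa using hxa
    have hsegx' : ∀ m, seg x' 0 m = seg x i m := by
      intro m
      apply seg_ext _ _ hx'inf hxinf
      intro j hj
      rw [hx'def, shift_iter_apply]
      have e : 0 + j + i = i + j := by omega
      rw [e]
    have hP : ∃ z : Sig A, z ∈ X ∧ Sig.len z = ⊤ ∧ z.1 0 = some a ∧
        seg z 0 (N + 1) = seg x i (N + 1) := ⟨x', hx'X, hx'l, hx'a, hsegx' _⟩
    obtain ⟨hzX, hzl, hza, hzseg⟩ := hP.choose_spec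
    set z := hP.choose with hzdef
    have hzinf := (len_top_iff z).1 hzl
    have hagree : ∀ j ≤ N, z.1 j = x'.1 j := by
      intro j hj
      have h1 : (seg z 0 (N + 1))[j]? = z.1 j := by
        simpa using seg_getElem? z hzinf 0 (N + 1) j (by omega)
      have h2 : (seg x' 0 (N + 1))[j]? = x'.1 j := by
        simpa using seg_getElem? x' hx'inf 0 (N + 1) j (by omega)
      rw [← h1, ← h2, hzseg, hsegx']
    have hDzx : Dmet z x' < δ :=
      lt_of_le_of_lt (Dmet_le z x' N hagree)
        (lt_of_le_of_lt (pow_le_pow_of_le_one (by norm_num) (by norm_num) (Nat.le_succ N)) hN)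
    have hφ0 : (φ z).1 0 = (φ x').1 0 := by
      have h1 := hU z hzX x' hx'X hzl hx'l hDzx
      exact agree_of_Dmet_lt _ _ 0 (by simpa using h1) 0 le_rfl
    have e1 : (φ z).1 0 = some (Φ a (seg z 0 (n a))) := hΦ z hzX hzl 0 a hza
    have e2 : (φ x').1 0 = some (Φ a (seg x' 0 (n a))) := hΦ x' hx'X hx'l 0 a hx'a
    have e3 : (φ x).1 i = some (Φ a (seg x i (n a))) := hΦ x hxX hxl i a hxa
    have key : Φ a (seg z 0 (n a)) = Φ a (seg x i (n a)) := by
      have h4 : some (Φ a (seg z 0 (n a))) = some (Φ a (seg x' 0 (n a))) := by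
        rw [← e1, ← e2, hφ0]
      rw [← hsegx']
      exact Option.some.inj h4
    rw [e3]
    simp only [dif_pos hP]
    rw [← hzdef, key]
end
end
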